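/- Let w_1 = r_1/q_1, …, w_N = r_N/q_N be positive rationals in lowest terms (gcd(r_i,q_i)=1), and put w := lcm(r_1,…,r_N)/gcd(q_1,…,q_N) and ℓ_i := w/w_i for each i. Then each ℓ_i is a positive integer, and for Re(s) > N and Re(x) > 0, ζ_N(s, x | w_1,…,w_N) = w^{-s} · Σ_{k_1=0}^{ℓ_1-1} ⋯ Σ_{k_N=0}^{ℓ_N-1} ζ_N(s, w^{-1}(x + k_1 w_1 + ⋯ + k_N w_N)). -/

import Mathlib

/-!
Write each index as `n = k + ℓ * m` with `0 ≤ k i < ℓ i`. Since `ℓ i * w i = w` for every `i`,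
the lattice point `x + ∑ n i * w i` equals `w * (w⁻¹ * (x + ∑ k i * w i) + ∑ m i)`, and because
`w` is a positive real its power splits off as `w ^ (-s)`. For `Re s > N` the series converges
absolutely (compare with `∏ (1 + n i) ^ (-Re s / N)`), which justifies regrouping it along the
residues `k`.
-/

open Finset

theorem Finset.gcd_mul_dvd_lcm_mul {ι α : Type*} [CommMonoidWithZero α] [NormalizedGCDMonoid α]
    {s : Finset ι} {r q : ι → α} {i : ι} (hi : i ∈ s) : s.gcd q * r i ∣ s.lcm r * q i := by
  rw [mul_comm (s.lcm r)]
  exact mul_dvd_mul (Finset.gcd_dvd hi) (Finset.dvd_lcm hi)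

section LcmGcd

variable {ι : Type*} {s : Finset ι} {r q : ι → ℕ} {i : ι}

theorem lcm_mul_div_gcd_mul_pos (hi : i ∈ s) (hr : ∀ j ∈ s, r j ≠ 0) (hq : q i ≠ 0) :
    0 < s.lcm r * q i / (s.gcd q * r i) := by
  have hL : s.lcm r ≠ 0 := fun h => by
    obtain ⟨j, hj, hrj⟩ := Finset.lcm_eq_zero_iff.mp h
    exact hr j hj hrj
  have hG : s.gcd q ≠ 0 := fun h => hq (Finset.gcd_eq_zero_iff.mp h i hi)
  exact Nat.div_pos (Nat.le_of_dvd (by positivity) (Finset.gcd_mul_dvd_lcm_mul hi))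
    (Nat.mul_pos (Nat.pos_of_ne_zero hG) (Nat.pos_of_ne_zero (hr i hi)))

theorem cast_lcm_mul_div_gcd_mul {K : Type*} [Field K] [CharZero K] (hi : i ∈ s)
    (hr : r i ≠ 0) (hq : q i ≠ 0) :
    ((s.lcm r * q i / (s.gcd q * r i) : ℕ) : K) =
      (((s.lcm r : ℕ) : K) / ((s.gcd q : ℕ) : K)) / ((r i : K) / (q i : K)) := by
  have hG : s.gcd q ≠ 0 := fun h => hq (Finset.gcd_eq_zero_iff.mp h i hi)
  rw [Nat.cast_div (Finset.gcd_mul_dvd_lcm_mul hi) (by simp [hG, hr])]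
  push_cast
  field_simp

end LcmGcd

theorem Complex.ofReal_mul_cpow {a : ℝ} (ha : 0 < a) (z w : ℂ) :
    ((a : ℂ) * z) ^ w = (a : ℂ) ^ w * z ^ w := by
  rcases eq_or_ne z 0 with rfl | hz
  · rcases eq_or_ne w 0 with rfl | hw <;> simp [*]
  have ha' : (a : ℂ) ≠ 0 := Complex.ofReal_ne_zero.mpr ha.ne'
  rw [Complex.cpow_def_of_ne_zero (mul_ne_zero ha' hz), Complex.cpow_def_of_ne_zero ha',
    Complex.cpow_def_of_ne_zero hz, Complex.log_ofReal_mul ha hz, ← Complex.exp_add, ← add_mul,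
    Complex.ofReal_log ha.le]

theorem Complex.norm_cpow_le_rpow_mul_exp (z w : ℂ) :
    ‖z ^ w‖ ≤ ‖z‖ ^ w.re * Real.exp (Real.pi * |w.im|) := by
  refine (Complex.norm_cpow_le z w).trans ?_
  rw [div_eq_mul_inv, ← Real.exp_neg]
  have h : |z.arg * w.im| ≤ Real.pi * |w.im| := by
    rw [abs_mul]
    exact mul_le_mul_of_nonneg_right (Complex.abs_arg_le_pi z) (abs_nonneg _)
  gcongr
  linarith [neg_abs_le (z.arg * w.im)]

theorem summable_prod_pi_of_nonneg {ι β : Type*} [Fintype ι] {g : β → ℝ} (hg0 : 0 ≤ g)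
    (hg : Summable g) : Summable fun n : ι → β => ∏ i, g (n i) := by
  classical
  refine summable_of_sum_le (c := (∑' b, g b) ^ Fintype.card ι)
    (fun n => Finset.prod_nonneg fun i _ => hg0 _) fun s => ?_
  set T : Finset β := s.biUnion fun n => univ.image n
  have hsT : s ⊆ Fintype.piFinset fun _ => T := fun n hn =>
    Fintype.mem_piFinset.mpr fun i => Finset.mem_biUnion.mpr ⟨n, hn, by simp⟩
  calc ∑ n ∈ s, ∏ i, g (n i)
      ≤ ∑ n ∈ Fintype.piFinset fun _ => T, ∏ i, g (n i) :=
        Finset.sum_le_sum_of_subset_of_nonneg hsT fun n _ _ =>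
          Finset.prod_nonneg fun i _ => hg0 _
    _ = ∏ _i : ι, ∑ b ∈ T, g b := (Finset.prod_univ_sum _ _).symm
    _ ≤ (∑' b, g b) ^ Fintype.card ι := by
        rw [Finset.prod_const, Finset.card_univ]
        gcongr
        · exact Finset.sum_nonneg fun b _ => hg0 b
        · exact hg.sum_le_tsum _ fun b _ => hg0 b

section Summability

variable {ι : Type*} [Fintype ι]

theorem prod_one_add_le_one_add_sum_pow (a : ι → ℝ) (ha : 0 ≤ a) :
    ∏ i, (1 + a i) ≤ (1 + ∑ i, a i) ^ Fintype.card ι := by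
  rw [← Finset.card_univ, ← Finset.prod_const]
  refine Finset.prod_le_prod (fun i _ => add_nonneg zero_le_one (ha i)) fun i _ => ?_
  exact add_le_add_right (Finset.single_le_sum (fun j _ => ha j) (Finset.mem_univ i)) 1

theorem summable_one_add_sum_rpow_neg {t : ℝ} (ht : (Fintype.card ι : ℝ) < t) :
    Summable fun n : ι → ℕ => (1 + ∑ i, (n i : ℝ)) ^ (-t) := by
  rcases isEmpty_or_nonempty ι with hι | hι
  · exact .of_finite
  have hcard : (0 : ℝ) < Fintype.card ι := by exact_mod_cast Fintype.card_pos
  set p := t / Fintype.card ι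
  have hp : 1 < p := (one_lt_div hcard).mpr ht
  have hg : Summable fun m : ℕ => (1 + (m : ℝ)) ^ (-p) := by
    have := (summable_nat_add_iff 1).mpr (Real.summable_nat_rpow.mpr (neg_lt_neg hp))
    simpa [add_comm] using this
  refine Summable.of_nonneg_of_le (fun n => by positivity) (fun n => ?_)
    (summable_prod_pi_of_nonneg (fun m => by positivity) hg)
  have hS : (0 : ℝ) ≤ ∑ i, (n i : ℝ) := by positivity
  calc (1 + ∑ i, (n i : ℝ)) ^ (-t)
      = ((1 + ∑ i, (n i : ℝ)) ^ Fintype.card ι) ^ (-p) := by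
        rw [← Real.rpow_natCast, ← Real.rpow_mul (by positivity), mul_neg,
          mul_div_cancel₀ _ hcard.ne']
    _ ≤ (∏ i, (1 + (n i : ℝ))) ^ (-p) :=
        Real.rpow_le_rpow_of_nonpos (by positivity)
          (prod_one_add_le_one_add_sum_pow _ fun i => by positivity) (by linarith)
    _ = ∏ i, (1 + (n i : ℝ)) ^ (-p) :=
        (Real.finsetProd_rpow _ _ (fun i _ => by positivity) _).symm

theorem summable_cpow_neg_add_sum_mul {w : ι → ℂ} (hw : ∀ i, 0 < (w i).re) {x : ℂ}
    (hx : 0 < x.re) {s : ℂ} (hs : (Fintype.card ι : ℝ) < s.re) :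
    Summable fun n : ι → ℕ => (x + ∑ i, (n i : ℂ) * w i) ^ (-s) := by
  obtain ⟨c, hc, hcx, hcw⟩ : ∃ c : ℝ, 0 < c ∧ c ≤ x.re ∧ ∀ i, c ≤ (w i).re := by
    obtain ⟨j, hj⟩ := Finite.exists_min fun j : Option ι => j.elim x.re fun i => (w i).re
    refine ⟨_, ?_, hj none, fun i => hj (some i)⟩
    cases j <;> simp [hx, hw]
  have hs0 : 0 ≤ s.re := le_trans (Nat.cast_nonneg _) hs.le
  refine Summable.of_norm_bounded
    ((summable_one_add_sum_rpow_neg hs).mul_left (c ^ (-s.re) * Real.exp (Real.pi * |s.im|)))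
    fun n => ?_
  set z := x + ∑ i, (n i : ℂ) * w i
  have hz : c * (1 + ∑ i, (n i : ℝ)) ≤ z.re := by
    have : z.re = x.re + ∑ i, (n i : ℝ) * (w i).re := by simp [z]
    rw [this, mul_add, mul_one, Finset.mul_sum]
    refine add_le_add hcx (Finset.sum_le_sum fun i _ => ?_)
    rw [mul_comm]
    exact mul_le_mul_of_nonneg_left (hcw i) (Nat.cast_nonneg _)
  calc ‖z ^ (-s)‖ ≤ ‖z‖ ^ (-s.re) * Real.exp (Real.pi * |s.im|) := by
        simpa using Complex.norm_cpow_le_rpow_mul_exp z (-s)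
    _ ≤ (c * (1 + ∑ i, (n i : ℝ))) ^ (-s.re) * Real.exp (Real.pi * |s.im|) := by
        refine mul_le_mul_of_nonneg_right ?_ (Real.exp_pos _).le
        exact Real.rpow_le_rpow_of_nonpos (by positivity) (hz.trans (Complex.re_le_norm z))
          (neg_nonpos.mpr hs0)
    _ = c ^ (-s.re) * Real.exp (Real.pi * |s.im|) * (1 + ∑ i, (n i : ℝ)) ^ (-s.re) := by
        rw [Real.mul_rpow hc.le (by positivity)]
        ring
section Decomposition

variable {ι : Type*} [Fintype ι] [DecidableEq ι]

def piDivModEquiv (ℓ : ι → ℕ) (hℓ : ∀ i, 0 < ℓ i) :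
    (Fintype.piFinset fun i => range (ℓ i)) × (ι → ℕ) ≃ (ι → ℕ) where
  toFun p := p.1.1 + ℓ * p.2
  invFun n :=
    (⟨fun i => n i % ℓ i, by simpa using fun i => Nat.mod_lt _ (hℓ i)⟩, fun i => n i / ℓ i)
  left_inv := by
    rintro ⟨⟨k, hk⟩, m⟩
    have hk' : ∀ i, k i < ℓ i := by simpa using hk
    ext i
    · simp [Nat.add_mul_mod_self_left, Nat.mod_eq_of_lt (hk' i)]
    · simp [Nat.add_mul_div_left _ _ (hℓ i), Nat.div_eq_of_lt (hk' i)]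
  right_inv n := funext fun i => Nat.mod_add_div (n i) (ℓ i)

theorem tsum_eq_sum_piFinset_tsum_add_mul {E : Type*} [AddCommGroup E] [UniformSpace E]
    [IsUniformAddGroup E] [CompleteSpace E] [T2Space E] {f : (ι → ℕ) → E} (hf : Summable f)
    (ℓ : ι → ℕ) (hℓ : ∀ i, 0 < ℓ i) :
    ∑' n, f n = ∑ k ∈ Fintype.piFinset fun i => range (ℓ i), ∑' m, f (k + ℓ * m) := by
  set e := piDivModEquiv ℓ hℓ
  have hfe : Summable (f ∘ e) := e.summable_iff.mpr hf
  calc ∑' n, f n = ∑' p, f (e p) := (e.tsum_eq f).symm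
    _ = ∑' k, ∑' m, f (e (k, m)) := hfe.tsum_prod' fun k => hfe.prod_factor k
    _ = _ := (tsum_fintype _).trans (Finset.sum_coe_sort _ fun k => ∑' m, f (k + ℓ * m))

end Decomposition

theorem cpow_add_sum_add_mul_mul_eq {ι : Type*} [Fintype ι] {w : ι → ℂ} {ℓ : ι → ℕ} {a : ℝ}
    (ha : 0 < a) (hℓw : ∀ i, (ℓ i : ℂ) * w i = a) (x s : ℂ) (k m : ι → ℕ) :
    (x + ∑ i, ((k + ℓ * m) i : ℂ) * w i) ^ s =
      (a : ℂ) ^ s * ((a : ℂ)⁻¹ * (x + ∑ i, (k i : ℂ) * w i) + ∑ i, (m i : ℂ)) ^ s := by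
  have ha' : (a : ℂ) ≠ 0 := Complex.ofReal_ne_zero.mpr ha.ne'
  have hpoint : x + ∑ i, ((k + ℓ * m) i : ℂ) * w i =
      a * ((a : ℂ)⁻¹ * (x + ∑ i, (k i : ℂ) * w i) + ∑ i, (m i : ℂ)) := by
    rw [mul_add, mul_inv_cancel_left₀ ha', Finset.mul_sum, add_assoc, ← Finset.sum_add_distrib]
    refine congrArg (x + ·) (Finset.sum_congr rfl fun i _ => ?_)
    rw [← hℓw i]
    push_cast [Pi.add_apply, Pi.mul_apply]
    ring
  rw [hpoint, Complex.ofReal_mul_cpow ha]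

theorem barnes_zeta_eq_sum_multiple_hurwitz_general
    (N : ℕ) (hN : 0 < N) (r q : Fin N → ℕ) (hr : ∀ i, 0 < r i) (hq : ∀ i, 0 < q i)
    (x : ℂ) (hx : 0 < x.re) (s : ℂ) (hs : (N : ℝ) < s.re) :
    (∀ i, 0 < (Finset.univ.lcm r * q i) / (Finset.univ.gcd q * r i) ∧
        (((Finset.univ.lcm r * q i) / (Finset.univ.gcd q * r i) : ℕ) : ℚ) =
          (((Finset.univ.lcm r : ℕ) : ℚ) / ((Finset.univ.gcd q : ℕ) : ℚ)) / ((r i : ℚ) / (q i : ℚ))) ∧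
    (∑' n : Fin N → ℕ, (x + ∑ i, (n i : ℂ) * ((r i : ℂ) / (q i : ℂ))) ^ (-s)) =
      (((Finset.univ.lcm r : ℕ) : ℂ) / ((Finset.univ.gcd q : ℕ) : ℂ)) ^ (-s) *
        ∑ k ∈ Fintype.piFinset
            (fun i => Finset.range ((Finset.univ.lcm r * q i) / (Finset.univ.gcd q * r i))),
          ∑' n : Fin N → ℕ,
            ((((Finset.univ.lcm r : ℕ) : ℂ) / ((Finset.univ.gcd q : ℕ) : ℂ))⁻¹ *
                (x + ∑ i, (k i : ℂ) * ((r i : ℂ) / (q i : ℂ))) + ∑ i, (n i : ℂ)) ^ (-s) := by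
  set L := univ.lcm r
  set G := univ.gcd q
  have hℓ (i : Fin N) : 0 < L * q i / (G * r i) :=
    lcm_mul_div_gcd_mul_pos (mem_univ i) (fun j _ => (hr j).ne') (hq i).ne'
  have hcast {K : Type} [Field K] [CharZero K] (i : Fin N) :=
    cast_lcm_mul_div_gcd_mul (K := K) (s := univ) (mem_univ i) (hr i).ne' (hq i).ne'
  refine ⟨fun i => ⟨hℓ i, hcast i⟩, ?_⟩
  -- `ℓ i` would vanish if `L` or `G` did (`Nat` division by zero is zero).
  have hL : 0 < L := Nat.pos_of_ne_zero fun h => by simpa [h] using hℓ ⟨0, hN⟩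
  have hG : 0 < G := Nat.pos_of_ne_zero fun h => by simpa [h] using hℓ ⟨0, hN⟩
  have hW : (L : ℂ) / G = ((L / G : ℝ) : ℂ) := by push_cast; rfl
  have hℓw (i : Fin N) :
      ((L * q i / (G * r i) : ℕ) : ℂ) * ((r i : ℂ) / (q i : ℂ)) = (L / G : ℝ) := by
    rw [hcast, div_mul_cancel₀ _ (by simp [(hr i).ne', (hq i).ne']), hW]
  have hw (i : Fin N) : 0 < ((r i : ℂ) / (q i : ℂ)).re := by
    have hreal : ((r i : ℂ) / (q i : ℂ)) = ((r i / q i : ℝ) : ℂ) := by push_cast; rfl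
    rw [hreal, Complex.ofReal_re]
    exact div_pos (by exact_mod_cast hr i) (by exact_mod_cast hq i)
  have hsum := summable_cpow_neg_add_sum_mul hw hx (s := s) (by simpa using hs)
  rw [tsum_eq_sum_piFinset_tsum_add_mul hsum _ hℓ, Finset.mul_sum, hW]
  refine Finset.sum_congr rfl fun k _ => ?_
  rw [← tsum_mul_left]
  exact tsum_congr fun m =>
    cpow_add_sum_add_mul_mul_eq (by positivity) hℓw x (-s) k m

/-- Proposition 2.2: with `w = lcm(r)/gcd(q)`, the `ℓ i = w / w i` are positive integers and
the Barnes zeta function is `w^{-s}` times a finite sum of multiple Hurwitz zeta functions. -/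
theorem barnes_zeta_eq_sum_multiple_hurwitz
    (N : ℕ) (hN : 0 < N) (r q : Fin N → ℕ) (hr : ∀ i, 0 < r i) (hq : ∀ i, 0 < q i)
    (hco : ∀ i, Nat.Coprime (r i) (q i))
    (x : ℂ) (hx : 0 < x.re) (s : ℂ) (hs : (N : ℝ) < s.re) :
    (∀ i, 0 < (Finset.univ.lcm r * q i) / (Finset.univ.gcd q * r i) ∧
        (((Finset.univ.lcm r * q i) / (Finset.univ.gcd q * r i) : ℕ) : ℚ) =
          (((Finset.univ.lcm r : ℕ) : ℚ) / ((Finset.univ.gcd q : ℕ) : ℚ)) / ((r i : ℚ) / (q i : ℚ))) ∧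
    (∑' n : Fin N → ℕ, (x + ∑ i, (n i : ℂ) * ((r i : ℂ) / (q i : ℂ))) ^ (-s)) =
      (((Finset.univ.lcm r : ℕ) : ℂ) / ((Finset.univ.gcd q : ℕ) : ℂ)) ^ (-s) *
        ∑ k ∈ Fintype.piFinset
            (fun i => Finset.range ((Finset.univ.lcm r * q i) / (Finset.univ.gcd q * r i))),
          ∑' n : Fin N → ℕ,
            ((((Finset.univ.lcm r : ℕ) : ℂ) / ((Finset.univ.gcd q : ℕ) : ℂ))⁻¹ *
                (x + ∑ i, (k i : ℂ) * ((r i : ℂ) / (q i : ℂ))) + ∑ i, (n i : ℂ)) ^ (-s) :=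
  barnes_zeta_eq_sum_multiple_hurwitz_general N hN r q hr hq x hx s hs
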